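/- Under the stated setup, if agent 1 prefers x_n to x_q, then no agent a_z with 3 ≤ z ≤ s has object x_n in her preference list. -/

import Mathlib

/-- The setting of the swap-dynamics model with `N` agents `0, 1, ..., N-1` and
`N` objects, object `j` being the object initially held by agent `j`.
Each agent has a preference list (a duplicate-free list of objects, most preferred
first), and the agents form a social network given by a simple graph. -/
structure SwapModel (N : ℕ) where
  /-- the preference list of each agent -/
  pref : Fin N → List (Fin N)
  nodup : ∀ i, (pref i).Nodup
  /-- the underlying social network -/
  G : SimpleGraph (Fin N)

namespace SwapModel

variable {N : ℕ}

/-- Agent `i` prefers object `u` to object `v`: both appear on her preference list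
and `u` appears (strictly) earlier. -/
def Prefers (M : SwapModel N) (i u v : Fin N) : Prop :=
  ∃ k l : ℕ, k < l ∧ (M.pref i)[k]? = some u ∧ (M.pref i)[l]? = some v

/-- An assignment: a bijection mapping every agent to an object on her list. -/
def IsAssignment (M : SwapModel N) (σ : Fin N → Fin N) : Prop :=
  Function.Bijective σ ∧ ∀ i, σ i ∈ M.pref i

/-- `(σ 0, σ 1, …, σ t)` is a sequence of swaps: each next assignment arises from
the previous one by performing a swap between two adjacent agents, each of whom
prefers the object of the other agent. -/
def IsSwapSeq (M : SwapModel N) (t : ℕ) (σ : ℕ → Fin N → Fin N) : Prop :=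
  M.IsAssignment (σ 0) ∧
    ∀ k, k < t → ∃ i j : Fin N, M.G.Adj i j ∧
      M.Prefers i (σ k j) (σ k i) ∧ M.Prefers j (σ k i) (σ k j) ∧
      σ (k + 1) = σ k ∘ Equiv.swap i j

end SwapModel

/-- A swap: agent `a1` gives object `o1` to agent `a2` and receives object `o2`;
this records the swap `τ = {{a1, o1}, {a2, o2}}`. -/
structure Swap (N : ℕ) where
  a1 : Fin N
  o1 : Fin N
  a2 : Fin N
  o2 : Fin N

namespace SwapModel

variable {N : ℕ}

/-- The assignment `σ` admits the swap `τ`. -/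
def Admitted (M : SwapModel N) (σ : Fin N → Fin N) (τ : Swap N) : Prop :=
  σ τ.a1 = τ.o1 ∧ σ τ.a2 = τ.o2 ∧ M.G.Adj τ.a1 τ.a2 ∧
    M.Prefers τ.a1 τ.o2 τ.o1 ∧ M.Prefers τ.a2 τ.o1 τ.o2

/-- The assignment obtained from `σ` by performing the swap `τ`. -/
def applySwap (σ : Fin N → Fin N) (τ : Swap N) : Fin N → Fin N :=
  σ ∘ Equiv.swap τ.a1 τ.a2

/-- The assignment obtained from `σ` by performing a sequence of swaps. -/
def applySeq (σ : Fin N → Fin N) : List (Swap N) → (Fin N → Fin N)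
  | [] => σ
  | τ :: φ => applySeq (applySwap σ τ) φ

/-- `φ` is a valid swap sequence for the start assignment `σ`. -/
def ValidSeq (M : SwapModel N) (σ : Fin N → Fin N) : List (Swap N) → Prop
  | [] => True
  | τ :: φ => M.Admitted σ τ ∧ M.ValidSeq (applySwap σ τ) φ

/-- Object `x` is reachable for agent `I` from the initial assignment `σ0`. -/
def Reachable (M : SwapModel N) (σ0 : Fin N → Fin N) (I x : Fin N) : Prop :=
  ∃ φ : List (Swap N), M.ValidSeq σ0 φ ∧ applySeq σ0 φ I = x

end SwapModel

/-- The agent that gives away object `q` in the swap `τ` (assuming `τ` involves `q`). -/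
def giver {N : ℕ} (q : Fin N) (τ : Swap N) : Fin N :=
  if τ.o1 = q then τ.a1 else τ.a2

/-!
Write `o_z` for the object that `a_z` receives in exchange for `q` in the `z`-th `q`-swap.
Between two consecutive `q`-swaps nobody touches `q`, so `a_z` is the agent who received
`q` in the `(z-1)`-st one, giving away `o_{z-1}`. Hence `a_z` prefers `o_z` to `q` and `q` to
`o_{z-1}`, and a list of at most three objects is then exactly `[o_z, q, o_{z-1}]`.
It remains to see that `o_w ≠ x_n` for `w ≥ 2`. An agent holding her top object never swaps
again, so if `a_w` obtained `x_n` she would hold it both right after `τ_r`, when agent `1`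
holds `q`, and at the end, when agent `1` holds `x_n`: impossible for a bijection.
-/

namespace List

theorem exists_eq_append_of_consecutive_filter {α : Type*} (p : α → Bool) (l : List α)
    {k : ℕ} (hk : k + 1 < (l.filter p).length) :
    ∃ l₁ l₂ l₃, l = l₁ ++ (l.filter p)[k] :: l₂ ++ (l.filter p)[k + 1] :: l₃ ∧
      ∀ x ∈ l₂, ¬ p x := by
  have hsplit : l.filter p = (l.filter p).take k ++
      (l.filter p)[k] :: (l.filter p)[k + 1] :: (l.filter p).drop (k + 2) := by
    rw [← drop_eq_getElem_cons, ← drop_eq_getElem_cons, take_append_drop]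
  obtain ⟨l₁, m, hl, -, hm⟩ := filter_eq_append_iff.mp hsplit
  obtain ⟨m₁, m₂, hm, -, -, hm₂⟩ := filter_eq_cons_iff.mp hm
  obtain ⟨l₂, l₃, hm₂, hl₂, -, -⟩ := filter_eq_cons_iff.mp hm₂
  exact ⟨l₁ ++ m₁, l₂, l₃, hl.trans (by rw [hm, hm₂]; simp), hl₂⟩

end List

def receiver {N : ℕ} (q : Fin N) (τ : Swap N) : Fin N :=
  if τ.o1 = q then τ.a2 else τ.a1

def otherObj {N : ℕ} (q : Fin N) (τ : Swap N) : Fin N :=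
  if τ.o1 = q then τ.o2 else τ.o1

def swapsInvolving {N : ℕ} (q : Fin N) (l : List (Swap N)) : List (Swap N) :=
  l.filter fun τ => decide (τ.o1 = q ∨ τ.o2 = q)

namespace Swap

variable {N : ℕ}

def Receives (τ : Swap N) (i x : Fin N) : Prop :=
  (τ.a1 = i ∧ τ.o2 = x) ∨ (τ.a2 = i ∧ τ.o1 = x)

theorem receives_giver (q : Fin N) (τ : Swap N) : τ.Receives (giver q τ) (otherObj q τ) := by
  by_cases h : τ.o1 = q <;> simp [Receives, giver, otherObj, h]

theorem receives_receiver {q : Fin N} {τ : Swap N} (hq : τ.o1 = q ∨ τ.o2 = q) :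
    τ.Receives (receiver q τ) q := by
  by_cases h : τ.o1 = q
  · simp [Receives, receiver, h]
  · simp [Receives, receiver, h, hq.resolve_left h]

end Swap

namespace SwapModel

variable {N : ℕ} {M : SwapModel N} {σ : Fin N → Fin N} {τ : Swap N} {i q : Fin N}

theorem eq_of_pref_getElem?_eq {k l : ℕ} {x : Fin N} (hk : (M.pref i)[k]? = some x)
    (hl : (M.pref i)[l]? = some x) : k = l :=
  (List.getElem?_inj (List.getElem?_eq_some_iff.mp hk).1 (M.nodup i)).mp (hk.trans hl.symm)

theorem Prefers.ne {u v : Fin N} (h : M.Prefers i u v) : u ≠ v := by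
  obtain ⟨k, l, hkl, hk, hl⟩ := h
  rintro rfl
  have := eq_of_pref_getElem?_eq hk hl
  omega

theorem not_prefers_of_pref_eq_cons {c u : Fin N} {l : List (Fin N)} (h : M.pref i = c :: l) :
    ¬ M.Prefers i u c := by
  rintro ⟨k, m, hkm, -, hm⟩
  have := eq_of_pref_getElem?_eq (l := 0) hm (by rw [h]; rfl)
  omega

theorem pref_eq_of_prefers_of_prefers {c b : Fin N} (hlen : (M.pref i).length ≤ 3)
    (hc : M.Prefers i c q) (hb : M.Prefers i q b) : M.pref i = [c, q, b] := by
  obtain ⟨k₁, l₁, h₁, hc, hq₁⟩ := hc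
  obtain ⟨k₂, l₂, h₂, hq₂, hb⟩ := hb
  have hl₁ : l₁ = k₂ := eq_of_pref_getElem?_eq hq₁ hq₂
  have hl₂ : l₂ < (M.pref i).length := (List.getElem?_eq_some_iff.mp hb).1
  obtain ⟨x, y, w, hxyw⟩ := List.length_eq_three.mp (show (M.pref i).length = 3 by omega)
  obtain ⟨rfl, rfl, rfl⟩ : k₁ = 0 ∧ l₁ = 1 ∧ l₂ = 2 := by omega
  rw [hxyw] at hc hq₁ hb ⊢
  simp only [List.getElem?_cons_zero, List.getElem?_cons_succ, Option.some.injEq] at hc hq₁ hb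
  rw [hc, hq₁, hb]

theorem applySeq_append (σ : Fin N → Fin N) (l₁ l₂ : List (Swap N)) :
    applySeq σ (l₁ ++ l₂) = applySeq (applySeq σ l₁) l₂ := by
  induction l₁ generalizing σ with
  | nil => rfl
  | cons τ l ih => exact ih _

theorem applySeq_concat (σ : Fin N → Fin N) (l : List (Swap N)) (τ : Swap N) :
    applySeq σ (l ++ [τ]) = applySwap (applySeq σ l) τ := by
  rw [applySeq_append]; rfl

theorem validSeq_append {l₁ l₂ : List (Swap N)} :
    M.ValidSeq σ (l₁ ++ l₂) ↔ M.ValidSeq σ l₁ ∧ M.ValidSeq (applySeq σ l₁) l₂ := by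
  induction l₁ generalizing σ with
  | nil => simp [ValidSeq, applySeq]
  | cons τ l ih => simp [ValidSeq, applySeq, ih, and_assoc]

theorem validSeq_concat {l : List (Swap N)} :
    M.ValidSeq σ (l ++ [τ]) ↔ M.ValidSeq σ l ∧ M.Admitted (applySeq σ l) τ := by
  simp [validSeq_append, ValidSeq]

theorem injective_applySeq (hσ : σ.Injective) (l : List (Swap N)) :
    (applySeq σ l).Injective := by
  induction l generalizing σ with
  | nil => exact hσ
  | cons τ l ih => exact ih (hσ.comp (Equiv.swap τ.a1 τ.a2).injective)

theorem Admitted.applySwap_of_receives {x : Fin N} (h : M.Admitted σ τ) (hi : τ.Receives i x) :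
    applySwap σ τ i = x := by
  rcases hi with ⟨rfl, rfl⟩ | ⟨rfl, rfl⟩
  · simp [applySwap, h.2.1]
  · simp [applySwap, h.1]

theorem applySeq_concat_of_receives {l : List (Swap N)} {x : Fin N}
    (hv : M.ValidSeq σ (l ++ [τ])) (hi : τ.Receives i x) : applySeq σ (l ++ [τ]) i = x := by
  rw [applySeq_concat]
  exact (validSeq_concat.mp hv).2.applySwap_of_receives hi

theorem Admitted.apply_giver (hτ : M.Admitted σ τ) (hq : τ.o1 = q ∨ τ.o2 = q) :
    σ (giver q τ) = q := by
  by_cases h : τ.o1 = q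
  · simp [giver, h, hτ.1]
  · simp [giver, h, hτ.2.1, hq.resolve_left h]

theorem Admitted.prefers_giver (hτ : M.Admitted σ τ) (hq : τ.o1 = q ∨ τ.o2 = q) :
    M.Prefers (giver q τ) (otherObj q τ) q := by
  by_cases h : τ.o1 = q
  · simpa [giver, otherObj, h] using hτ.2.2.2.1
  · simpa [giver, otherObj, h, hq.resolve_left h] using hτ.2.2.2.2

theorem Admitted.prefers_receiver (hτ : M.Admitted σ τ) (hq : τ.o1 = q ∨ τ.o2 = q) :
    M.Prefers (receiver q τ) q (otherObj q τ) := by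
  by_cases h : τ.o1 = q
  · simpa [receiver, otherObj, h] using hτ.2.2.2.2
  · simpa [receiver, otherObj, h, hq.resolve_left h] using hτ.2.2.2.1

theorem applySeq_apply_of_forall_not_involves {l : List (Swap N)} (hv : M.ValidSeq σ l)
    (hl : ∀ τ ∈ l, ¬(τ.o1 = q ∨ τ.o2 = q)) (hi : σ i = q) : applySeq σ l i = q := by
  induction l generalizing σ with
  | nil => exact hi
  | cons τ l ih =>
    obtain ⟨⟨h₁, h₂, -⟩, hv⟩ := hv
    have hτ := hl τ List.mem_cons_self
    refine ih hv (fun τ' h => hl τ' (List.mem_cons_of_mem _ h)) ?_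
    have hi₁ : i ≠ τ.a1 := by rintro rfl; exact hτ (.inl (h₁ ▸ hi))
    have hi₂ : i ≠ τ.a2 := by rintro rfl; exact hτ (.inr (h₂ ▸ hi))
    simp [applySwap, Equiv.swap_apply_of_ne_of_ne hi₁ hi₂, hi]

theorem applySeq_apply_of_forall_not_prefers {l : List (Swap N)} (hv : M.ValidSeq σ l)
    (hi : ∀ u, ¬ M.Prefers i u (σ i)) : applySeq σ l i = σ i := by
  induction l generalizing σ with
  | nil => rfl
  | cons τ l ih =>
    obtain ⟨⟨h₁, h₂, -, p₁, p₂⟩, hv⟩ := hv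
    have hi₁ : i ≠ τ.a1 := by rintro rfl; exact hi _ (h₁ ▸ p₁)
    have hi₂ : i ≠ τ.a2 := by rintro rfl; exact hi _ (h₂ ▸ p₂)
    have hfix : applySwap σ τ i = σ i := by
      simp [applySwap, Equiv.swap_apply_of_ne_of_ne hi₁ hi₂]
    exact hfix ▸ ih hv (hfix ▸ hi)

theorem applySeq_apply_of_receives_head {l₁ l₂ : List (Swap N)} {c : Fin N}
    {m : List (Fin N)} (hv : M.ValidSeq σ (l₁ ++ τ :: l₂)) (hi : τ.Receives i c)
    (htop : M.pref i = c :: m) : applySeq σ (l₁ ++ τ :: l₂) i = c := by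
  rw [← List.singleton_append, ← List.append_assoc] at hv ⊢
  obtain ⟨hv₁, hv₂⟩ := validSeq_append.mp hv
  have hc : applySeq σ (l₁ ++ [τ]) i = c := applySeq_concat_of_receives hv₁ hi
  rw [applySeq_append, applySeq_apply_of_forall_not_prefers hv₂
    (hc ▸ fun _ => not_prefers_of_pref_eq_cons htop), hc]

/-- Whoever gives away `q` received it in the previous swap involving `q`. -/
theorem prefers_giver_of_consecutive (hσ : σ.Injective) {l₁ l₂ l₃ : List (Swap N)}
    {τ τ' : Swap N} (hv : M.ValidSeq σ (l₁ ++ τ :: l₂ ++ τ' :: l₃))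
    (hτ : τ.o1 = q ∨ τ.o2 = q) (hτ' : τ'.o1 = q ∨ τ'.o2 = q)
    (hl₂ : ∀ υ ∈ l₂, ¬(υ.o1 = q ∨ υ.o2 = q)) :
    M.Prefers (giver q τ') (otherObj q τ') q ∧ M.Prefers (giver q τ') q (otherObj q τ) := by
  obtain ⟨hv, hadm'⟩ := validSeq_append.mp hv
  obtain ⟨hadm, hv₂⟩ := (validSeq_append.mp hv).2
  have hrecv : applySeq σ (l₁ ++ τ :: l₂) (receiver q τ) = q := by
    rw [applySeq_append]
    show applySeq (applySwap (applySeq σ l₁) τ) l₂ _ = q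
    exact applySeq_apply_of_forall_not_involves hv₂ hl₂
      (hadm.applySwap_of_receives (Swap.receives_receiver hτ))
  have hgiver : giver q τ' = receiver q τ :=
    injective_applySeq hσ _ ((hadm'.1.apply_giver hτ').trans hrecv.symm)
  exact ⟨hadm'.1.prefers_giver hτ', hgiver ▸ hadm.prefers_receiver hτ⟩

theorem pref_giver_eq_and_otherObj_ne (hσ : σ.Injective)
    (hlen : ∀ i, (M.pref i).length ≤ 3) {L R : List (Swap N)} (hv : M.ValidSeq σ (L ++ R))
    {i₀ c : Fin N} (hL : applySeq σ L i₀ ≠ c) (hLR : applySeq σ (L ++ R) i₀ = c) {k : ℕ}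
    (hk : k + 1 < (swapsInvolving q L).length) :
    M.pref (giver q (swapsInvolving q L)[k + 1]) =
        [otherObj q (swapsInvolving q L)[k + 1], q, otherObj q (swapsInvolving q L)[k]] ∧
      otherObj q (swapsInvolving q L)[k + 1] ≠ c := by
  have hinv : ∀ υ ∈ swapsInvolving q L, υ.o1 = q ∨ υ.o2 = q := fun υ h => by
    simpa [swapsInvolving] using (List.mem_filter.mp h).2
  have hτ := hinv _ (List.getElem_mem (Nat.lt_of_succ_lt hk))
  have hτ' := hinv _ (List.getElem_mem hk)
  obtain ⟨l₁, l₂, l₃, hL', hl₂⟩ : ∃ l₁ l₂ l₃, L = l₁ ++ (swapsInvolving q L)[k] :: l₂ ++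
      (swapsInvolving q L)[k + 1] :: l₃ ∧ ∀ υ ∈ l₂, ¬ decide (υ.o1 = q ∨ υ.o2 = q) :=
    List.exists_eq_append_of_consecutive_filter _ L hk
  set τ := (swapsInvolving q L)[k]
  set τ' := (swapsInvolving q L)[k + 1]
  have hvL : M.ValidSeq σ (l₁ ++ τ :: l₂ ++ τ' :: l₃) := hL' ▸ (validSeq_append.mp hv).1
  obtain ⟨hgive, hrecv⟩ := prefers_giver_of_consecutive hσ hvL hτ hτ'
    (fun υ h => by simpa using hl₂ υ h)
  have hpref := pref_eq_of_prefers_of_prefers (hlen _) hgive hrecv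
  refine ⟨hpref, fun hc => hL ?_⟩
  have hLR' : L ++ R = l₁ ++ τ :: l₂ ++ τ' :: (l₃ ++ R) := by rw [hL']; simp
  have hrc : τ'.Receives (giver q τ') c := hc ▸ Swap.receives_giver q τ'
  have htop : M.pref (giver q τ') = c :: _ := hc ▸ hpref
  have hkeep := applySeq_apply_of_receives_head (hLR' ▸ hv) hrc htop
  have hkeepL := applySeq_apply_of_receives_head hvL hrc htop
  rw [hLR'] at hLR
  rw [injective_applySeq hσ _ (hLR.trans hkeep.symm), hL']
  exact hkeepL

end SwapModel

open SwapModel in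
/-- Lemma 1 (vi).  Under the setup of Lemma 1 (agents `0, …, N`,
preference lists of length at most three, initial assignment `σ0 = id`, a valid swap
sequence `φ` in which agent `0` obtains object `Fin.last N` in the last swap, the swap
`τr = φ[r] = {{0, p}, {k, q}}`, `φ'` the subsequence of the prefix `φ[0..r]` of swaps
involving object `q`, and `a z` the agent giving away `q` in the `z`-th swap of `φ'`),
if agent `0` prefers object `Fin.last N` to object `q`, then no agent `a z` with
`3 ≤ z ≤ s` has object `Fin.last N` in her preference list. -/
theorem statement4 (N : ℕ) (M : SwapModel (N + 1))
    (hpref3 : ∀ i, (M.pref i).length ≤ 3)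
    (φ : List (Swap (N + 1))) (hvalid : M.ValidSeq id φ)
    (hne : φ ≠ [])
    (hlast : ((φ.getLast hne).a1 = 0 ∧ (φ.getLast hne).o2 = Fin.last N) ∨
             ((φ.getLast hne).a2 = 0 ∧ (φ.getLast hne).o1 = Fin.last N))
    (p q : Fin (N + 1)) (r : ℕ) (hr : r < φ.length)
    (hτr : ((φ[r]'hr).a1 = 0 ∧ (φ[r]'hr).o1 = p ∧ (φ[r]'hr).o2 = q) ∨
           ((φ[r]'hr).a2 = 0 ∧ (φ[r]'hr).o2 = p ∧ (φ[r]'hr).o1 = q))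
    (φ' : List (Swap (N + 1)))
    (hφ' : φ' = (φ.take (r + 1)).filter (fun τ => decide (τ.o1 = q ∨ τ.o2 = q)))
    (a : ℕ → Fin (N + 1))
    (ha : ∀ (z : ℕ) (h1 : 1 ≤ z) (hz : z ≤ φ'.length),
      a z = giver q (φ'[z - 1]'(by omega))) :
    ∀ hpn : M.Prefers 0 (Fin.last N) q,
    ∀ z, 3 ≤ z → z ≤ φ'.length → Fin.last N ∉ M.pref (a z) := by
  intro hpn z hz₃ hzs
  obtain ⟨k, rfl⟩ : ∃ k, z = k + 3 := ⟨z - 3, by omega⟩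
  subst hφ'
  have hvalid' : M.ValidSeq id (φ.take (r + 1) ++ φ.drop (r + 1)) := by
    rwa [List.take_append_drop]
  have hq : applySeq id (φ.take (r + 1)) 0 = q := by
    rw [← List.take_append_getElem hr] at hvalid' ⊢
    exact applySeq_concat_of_receives (validSeq_append.mp hvalid').1
      (hτr.imp (fun h => ⟨h.1, h.2.2⟩) (fun h => ⟨h.1, h.2.2⟩))
  have hn : applySeq id (φ.take (r + 1) ++ φ.drop (r + 1)) 0 = Fin.last N := by
    rw [List.take_append_drop, ← List.dropLast_concat_getLast hne]
    exact applySeq_concat_of_receives (by rwa [List.dropLast_concat_getLast]) hlast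
  have hqn : q ≠ Fin.last N := hpn.ne.symm
  have hk : k + 1 + 1 < (swapsInvolving q (φ.take (r + 1))).length := hzs
  obtain ⟨hpref, hne₂⟩ := pref_giver_eq_and_otherObj_ne Function.injective_id hpref3 hvalid'
    (by rwa [hq]) hn hk
  obtain ⟨-, hne₁⟩ := pref_giver_eq_and_otherObj_ne Function.injective_id hpref3 hvalid'
    (by rwa [hq]) hn (Nat.lt_of_succ_lt hk)
  have haz : a (k + 3) = giver q (swapsInvolving q (φ.take (r + 1)))[k + 1 + 1] :=
    ha (k + 3) (by omega) hzs
  simp only [haz, hpref, List.mem_cons, List.not_mem_nil, or_false, not_or]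
  exact ⟨hne₂.symm, hqn.symm, hne₁.symm⟩
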